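/- For a connected undirected graph G with Laplacian L and any nonzero mean-zero opinion vector s, the ratio (s^T s) / (s^T (I+L)^{-1} s) is at least 1 + (1/2) * d_min * h_G^2, where d_min is the minimum degree and h_G the Cheeger constant; in particular this ratio is at least 1. -/

import Mathlib

open Matrix

/-- The volume of a vertex set: the sum of degrees in `S`. -/
noncomputable def volume {n : ℕ} (G : SimpleGraph (Fin n)) [DecidableRel G.Adj]
    (S : Finset (Fin n)) : ℝ :=
  ∑ i ∈ S, (G.degree i : ℝ)

/-- The number of boundary edges of `S`: edges with one end in `S` and the
other outside `S`. -/
noncomputable def boundaryEdges {n : ℕ} (G : SimpleGraph (Fin n))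
    [DecidableRel G.Adj] (S : Finset (Fin n)) : ℝ :=
  ((Finset.univ.filter
      (fun p : Fin n × Fin n => p.1 ∈ S ∧ p.2 ∉ S ∧ G.Adj p.1 p.2)).card : ℝ)

/-- The Cheeger constant: `h_G = min_{S : vol(S) ≤ vol(V)/2} |∂S| / vol(S)`. -/
noncomputable def cheegerConst {n : ℕ} (G : SimpleGraph (Fin n))
    [DecidableRel G.Adj] : ℝ :=
  sInf { x : ℝ | ∃ S : Finset (Fin n), S.Nonempty ∧
    volume G S ≤ volume G Finset.univ / 2 ∧ x = boundaryEdges G S / volume G S }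

namespace CheegerAux

open Finset

variable {n : ℕ}

lemma quad_form (G : SimpleGraph (Fin (n+2))) [DecidableRel G.Adj] (x : Fin (n+2) → ℝ) :
    ∑ i, ∑ j, (if G.Adj i j then (x i - x j)^2 else 0) = 2 * (x ⬝ᵥ (G.lapMatrix ℝ *ᵥ x)) := by
  have h := SimpleGraph.lapMatrix_toLinearMap₂' ℝ G x
  rw [Matrix.toLinearMap₂'_apply'] at h
  linarith

lemma degree_pos (G : SimpleGraph (Fin (n+2))) [DecidableRel G.Adj] (hconn : G.Connected)
    (i : Fin (n+2)) : 0 < G.degree i := by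
  rw [G.degree_pos_iff_exists_adj]
  obtain ⟨j, hj⟩ := exists_ne i
  obtain ⟨w⟩ := hconn.preconnected i j
  cases w with
  | nil => exact absurd rfl hj
  | cons h p => exact ⟨_, h⟩

lemma cheeger_nonneg (G : SimpleGraph (Fin (n+2))) [DecidableRel G.Adj] :
    0 ≤ cheegerConst G := by
  apply Real.sInf_nonneg
  rintro x ⟨S, -, -, rfl⟩
  have h1 : 0 ≤ boundaryEdges G S := Nat.cast_nonneg _
  have h2 : 0 ≤ volume G S := Finset.sum_nonneg fun i _ => by positivity
  positivity

set_option maxHeartbeats 2000000 in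
lemma cheeger_core (G : SimpleGraph (Fin (n+2))) [DecidableRel G.Adj] (hconn : G.Connected)
    (lam : ℝ) (v : Fin (n+2) → ℝ) (hlam : 0 < lam)
    (heig : G.lapMatrix ℝ *ᵥ v = lam • v)
    (hne : ∃ i, 0 < v i)
    (hvol : volume G (Finset.univ.filter (fun i => 0 < v i)) ≤ volume G Finset.univ / 2) :
    (1/2) * (Finset.univ.inf' Finset.univ_nonempty (fun i => (G.degree i : ℝ))) *
      (cheegerConst G)^2 ≤ lam := by
  classical
  set L := G.lapMatrix ℝ with hLdef
  set g : Fin (n+2) → ℝ := fun i => max (v i) 0 with hgdef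
  have hgnn : ∀ i, 0 ≤ g i := fun i => le_max_right _ _
  have hgv : ∀ i, 0 < v i → g i = v i := fun i h => max_eq_left h.le
  have hgz : ∀ i, ¬ 0 < v i → g i = 0 := fun i h => max_eq_right (not_lt.mp h)
  have hgpos_iff : ∀ i, (0 < g i ↔ 0 < v i) := by
    intro i
    constructor
    · intro h
      by_contra hv
      rw [hgz i hv] at h
      exact lt_irrefl 0 h
    · intro h
      rw [hgv i h]
      exact h
  have hdeg1 : ∀ i, (1:ℝ) ≤ (G.degree i : ℝ) := fun i => by
    exact_mod_cast degree_pos G hconn i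
  set dmin := Finset.univ.inf' Finset.univ_nonempty (fun i => (G.degree i : ℝ)) with hdmindef
  have hdmin1 : (1:ℝ) ≤ dmin := Finset.le_inf' _ _ fun i _ => hdeg1 i
  have hdminle : ∀ i, dmin ≤ (G.degree i:ℝ) := fun i => Finset.inf'_le _ (Finset.mem_univ i)
  -- Rayleigh quotient bound for the truncation g
  have hray : g ⬝ᵥ (L *ᵥ g) ≤ lam * (g ⬝ᵥ g) := by
    have hterm : ∀ i, g i * (L *ᵥ g) i ≤ lam * (g i * g i) := by
      intro i
      by_cases hvi : 0 < v i
      · have hgi : g i = v i := hgv i hvi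
        have h1 : (L *ᵥ g) i ≤ (L *ᵥ v) i := by
          rw [hLdef, SimpleGraph.lapMatrix_mulVec_apply, SimpleGraph.lapMatrix_mulVec_apply]
          have hsum : ∑ u ∈ G.neighborFinset i, v u ≤ ∑ u ∈ G.neighborFinset i, g u :=
            Finset.sum_le_sum fun u _ => le_max_left _ _
          rw [hgi]
          linarith
        have h2 : (L *ᵥ v) i = lam * v i := by
          rw [heig]
          simp
        have := mul_le_mul_of_nonneg_left (h1.trans (le_of_eq h2)) (hgnn i)
        calc g i * (L *ᵥ g) i ≤ g i * (lam * v i) := this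
        _ = lam * (g i * g i) := by rw [hgi]; ring
      · have hgi : g i = 0 := hgz i hvi
        rw [hgi]
        simp
    calc g ⬝ᵥ (L *ᵥ g) = ∑ i, g i * (L *ᵥ g) i := rfl
    _ ≤ ∑ i, lam * (g i * g i) := Finset.sum_le_sum fun i _ => hterm i
    _ = lam * (g ⬝ᵥ g) := by rw [← Finset.mul_sum]; rfl
  -- some vertex has g = 0
  have hvolpos_univ : 0 < volume G Finset.univ := by
    rw [volume]
    refine Finset.sum_pos (fun i _ => ?_) Finset.univ_nonempty
    linarith [hdeg1 i]
  have hexzero : ∃ j, g j = 0 := by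
    by_contra h
    push_neg at h
    have huniv : Finset.univ.filter (fun i => 0 < v i) = Finset.univ := by
      apply Finset.filter_true_of_mem
      intro i _
      rw [← hgpos_iff i]
      exact (hgnn i).lt_of_ne' (h i)
    rw [huniv] at hvol
    linarith
  -- sorting
  set σ := Tuple.sort g with hσ
  have hmono : Monotone (g ∘ σ) := Tuple.monotone_sort g
  set r : Fin (n+2) → ℕ := fun i => ((σ.symm i : Fin (n+2)) : ℕ) with hrdef
  have hr_le : ∀ i, r i ≤ n+1 := fun i => Fin.is_le _
  have hgr : ∀ i, g i = (g ∘ σ) (σ.symm i) := fun i => by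
    simp [Function.comp]
  set q : ℕ → ℝ := fun k => ((g ∘ σ) (⟨min k (n+1), by omega⟩ : Fin (n+2)))^2 with hqdef
  have hfnn : ∀ k : Fin (n+2), 0 ≤ (g ∘ σ) k := fun k => hgnn _
  have hqnn : ∀ k, 0 ≤ q k := fun k => sq_nonneg _
  have hqmono : Monotone q := by
    intro a b hab
    apply pow_le_pow_left₀ (hfnn _)
    apply hmono
    simp only [Fin.mk_le_mk]
    omega
  have hq0 : q 0 = 0 := by
    obtain ⟨j0, hj0⟩ := hexzero
    have h1 : (g ∘ σ) 0 ≤ (g ∘ σ) (σ.symm j0) := hmono (Fin.zero_le _)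
    rw [← hgr j0, hj0] at h1
    have h2 : (0:ℝ) ≤ (g ∘ σ) 0 := hfnn 0
    have h3 : (g ∘ σ) 0 = 0 := le_antisymm h1 h2
    have e0 : (⟨min 0 (n+1), by omega⟩ : Fin (n+2)) = 0 := by
      ext
      simp
    have h4 : q 0 = ((g ∘ ⇑σ) 0)^2 :=
      congrArg (fun t : Fin (n+2) => ((g ∘ ⇑σ) t)^2) e0
    rw [h4, h3]
    simp
  set w : ℕ → ℝ := fun k => q (k+1) - q k with hwdef
  have hw : ∀ k, 0 ≤ w k := fun k => sub_nonneg.mpr (hqmono (Nat.le_succ k))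
  have htel : ∀ k, ∑ j ∈ Finset.range k, w j = q k := by
    intro k
    rw [hwdef]
    rw [Finset.sum_range_sub q k, hq0, sub_zero]
  have hqr : ∀ i, (g i)^2 = q (r i) := by
    intro i
    have hmin : (⟨min (r i) (n+1), by omega⟩ : Fin (n+2)) = σ.symm i := by
      ext
      simp [min_eq_left (hr_le i), hrdef]
      exact Fin.is_le _
    rw [hqdef]
    simp only [hmin]
    rw [← hgr i]
  have hind : ∀ i, (g i)^2 = ∑ k ∈ Finset.range (n+1), w k * (if k < r i then 1 else 0) := by
    intro i
    have h1 : ∑ k ∈ Finset.range (n+1), w k * (if k < r i then 1 else 0)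
        = ∑ k ∈ (Finset.range (n+1)).filter (fun k => k < r i), w k := by
      rw [Finset.sum_filter]
      refine Finset.sum_congr rfl fun k _ => ?_
      by_cases h : k < r i <;> simp [h]
    have h2 : (Finset.range (n+1)).filter (fun k => k < r i) = Finset.range (r i) := by
      ext a
      simp only [Finset.mem_filter, Finset.mem_range]
      constructor
      · rintro ⟨_, h⟩; exact h
      · intro h; exact ⟨lt_of_lt_of_le h (hr_le i), h⟩
    rw [h1, h2, htel, hqr]
  set S : ℕ → Finset (Fin (n+2)) := fun k => Finset.univ.filter (fun i => k < r i) with hSdef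
  -- pointwise telescoping of |g i ^ 2 - g j ^ 2|
  have hcase : ∀ i j, r j ≤ r i → (g i)^2 - (g j)^2 =
      ∑ k ∈ Finset.range (n+1), w k *
        (if (k < r i ∧ ¬ k < r j) ∨ (k < r j ∧ ¬ k < r i) then 1 else 0) := by
    intro i j hji
    rw [hind i, hind j, ← Finset.sum_sub_distrib]
    refine Finset.sum_congr rfl fun k _ => ?_
    by_cases h2 : k < r i
    · by_cases h1 : k < r j
      · simp [h1, h2]
      · simp [h1, h2]
    · by_cases h1 : k < r j
      · exact absurd (lt_of_lt_of_le h1 hji) h2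
      · simp [h1, h2]
  have habs : ∀ i j, |(g i)^2 - (g j)^2| =
      ∑ k ∈ Finset.range (n+1), w k *
        (if (k < r i ∧ ¬ k < r j) ∨ (k < r j ∧ ¬ k < r i) then 1 else 0) := by
    intro i j
    rcases le_total (r j) (r i) with hji | hij
    · have hgij : g j ≤ g i := by
        rw [hgr i, hgr j]
        apply hmono
        rw [Fin.le_def]
        exact hji
      rw [abs_of_nonneg (by nlinarith [hgnn i, hgnn j] : (0:ℝ) ≤ (g i)^2 - (g j)^2)]
      exact hcase i j hji
    · have hgij : g i ≤ g j := by
        rw [hgr i, hgr j]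
        apply hmono
        rw [Fin.le_def]
        exact hij
      rw [abs_sub_comm, abs_of_nonneg (by nlinarith [hgnn i, hgnn j] : (0:ℝ) ≤ (g j)^2 - (g i)^2)]
      rw [hcase j i hij]
      refine Finset.sum_congr rfl fun k _ => ?_
      exact congrArg (fun z => w k * z) (if_congr or_comm rfl rfl)
  set T : ℝ := ∑ i, ∑ j, if G.Adj i j then |(g i)^2 - (g j)^2| else 0 with hTdef
  set P : ℝ := ∑ i, (G.degree i:ℝ) * (g i)^2 with hPdef
  -- decomposition of T over sweep cuts
  have hTsplit : T = ∑ k ∈ Finset.range (n+1), w k *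
      (∑ i, ∑ j, if G.Adj i j ∧ ((k < r i ∧ ¬ k < r j) ∨ (k < r j ∧ ¬ k < r i))
        then (1:ℝ) else 0) := by
    rw [hTdef]
    have step1 : ∀ i j : Fin (n+2), (if G.Adj i j then |(g i)^2 - (g j)^2| else 0) =
        ∑ k ∈ Finset.range (n+1),
          (if G.Adj i j ∧ ((k < r i ∧ ¬ k < r j) ∨ (k < r j ∧ ¬ k < r i))
            then w k else 0) := by
      intro i j
      by_cases hA : G.Adj i j
      · rw [if_pos hA, habs i j]
        refine Finset.sum_congr rfl fun k _ => ?_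
        by_cases hc : ((k < r i ∧ ¬ k < r j) ∨ (k < r j ∧ ¬ k < r i)) <;>
          simp [hA, hc]
      · simp [hA]
    calc ∑ i, ∑ j, (if G.Adj i j then |(g i)^2 - (g j)^2| else 0)
        = ∑ i, ∑ j, ∑ k ∈ Finset.range (n+1),
          (if G.Adj i j ∧ ((k < r i ∧ ¬ k < r j) ∨ (k < r j ∧ ¬ k < r i))
            then w k else 0) := by
          exact Finset.sum_congr rfl fun i _ => Finset.sum_congr rfl fun j _ => step1 i j
      _ = ∑ k ∈ Finset.range (n+1), ∑ i, ∑ j,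
          (if G.Adj i j ∧ ((k < r i ∧ ¬ k < r j) ∨ (k < r j ∧ ¬ k < r i))
            then w k else 0) := by
          rw [show (∑ i : Fin (n+2), ∑ j : Fin (n+2), ∑ k ∈ Finset.range (n+1),
            (if G.Adj i j ∧ ((k < r i ∧ ¬ k < r j) ∨ (k < r j ∧ ¬ k < r i))
              then w k else 0)) = ∑ i : Fin (n+2), ∑ k ∈ Finset.range (n+1),
                ∑ j : Fin (n+2),
            (if G.Adj i j ∧ ((k < r i ∧ ¬ k < r j) ∨ (k < r j ∧ ¬ k < r i))
              then w k else 0) from Finset.sum_congr rfl fun i _ => Finset.sum_comm]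
          exact Finset.sum_comm
      _ = ∑ k ∈ Finset.range (n+1), w k *
          (∑ i, ∑ j, if G.Adj i j ∧ ((k < r i ∧ ¬ k < r j) ∨ (k < r j ∧ ¬ k < r i))
            then (1:ℝ) else 0) := by
          refine Finset.sum_congr rfl fun k _ => ?_
          rw [Finset.mul_sum]
          refine Finset.sum_congr rfl fun i _ => ?_
          rw [Finset.mul_sum]
          refine Finset.sum_congr rfl fun j _ => ?_
          by_cases hc : G.Adj i j ∧ ((k < r i ∧ ¬ k < r j) ∨ (k < r j ∧ ¬ k < r i)) <;>
            simp [hc]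
  -- each crossing sum counts boundary edges twice
  have hbdry : ∀ k, (∑ i, ∑ j,
      if G.Adj i j ∧ ((k < r i ∧ ¬ k < r j) ∨ (k < r j ∧ ¬ k < r i)) then (1:ℝ) else 0)
      = 2 * boundaryEdges G (S k) := by
    intro k
    have hb : boundaryEdges G (S k) = ∑ i, ∑ j,
        (if G.Adj i j ∧ (k < r i ∧ ¬ k < r j) then (1:ℝ) else 0) := by
      rw [boundaryEdges]
      rw [Finset.natCast_card_filter]
      rw [← Finset.univ_product_univ, Finset.sum_product]
      refine Finset.sum_congr rfl fun i _ => Finset.sum_congr rfl fun j _ => ?_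
      refine if_congr ?_ rfl rfl
      simp only [hSdef, Finset.mem_filter, Finset.mem_univ, true_and]
      tauto
    have hb2 : ∑ i, ∑ j, (if G.Adj i j ∧ (k < r j ∧ ¬ k < r i) then (1:ℝ) else 0)
        = boundaryEdges G (S k) := by
      rw [hb, Finset.sum_comm]
      refine Finset.sum_congr rfl fun j _ => Finset.sum_congr rfl fun i _ => ?_
      refine if_congr ?_ rfl rfl
      rw [G.adj_comm]
    have hsplit : ∀ i j : Fin (n+2),
        (if G.Adj i j ∧ ((k < r i ∧ ¬ k < r j) ∨ (k < r j ∧ ¬ k < r i)) then (1:ℝ) else 0)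
        = (if G.Adj i j ∧ (k < r i ∧ ¬ k < r j) then (1:ℝ) else 0)
          + (if G.Adj i j ∧ (k < r j ∧ ¬ k < r i) then (1:ℝ) else 0) := by
      intro i j
      by_cases hA : G.Adj i j <;> by_cases h1 : k < r i <;> by_cases h2 : k < r j <;>
        simp [hA, h1, h2]
    calc ∑ i, ∑ j,
        (if G.Adj i j ∧ ((k < r i ∧ ¬ k < r j) ∨ (k < r j ∧ ¬ k < r i)) then (1:ℝ) else 0)
        = ∑ i, ∑ j, ((if G.Adj i j ∧ (k < r i ∧ ¬ k < r j) then (1:ℝ) else 0)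
          + (if G.Adj i j ∧ (k < r j ∧ ¬ k < r i) then (1:ℝ) else 0)) := by
          exact Finset.sum_congr rfl fun i _ => Finset.sum_congr rfl fun j _ => hsplit i j
      _ = (∑ i, ∑ j, (if G.Adj i j ∧ (k < r i ∧ ¬ k < r j) then (1:ℝ) else 0))
          + ∑ i, ∑ j, (if G.Adj i j ∧ (k < r j ∧ ¬ k < r i) then (1:ℝ) else 0) := by
          rw [← Finset.sum_add_distrib]
          refine Finset.sum_congr rfl fun i _ => ?_
          rw [← Finset.sum_add_distrib]
      _ = 2 * boundaryEdges G (S k) := by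
          rw [← hb, hb2]
          ring
  -- Abel summation for P
  have hPsum : P = ∑ k ∈ Finset.range (n+1), w k * volume G (S k) := by
    have hvolS : ∀ k, volume G (S k) = ∑ i, (if k < r i then (G.degree i:ℝ) else 0) := by
      intro k
      rw [volume, hSdef, Finset.sum_filter]
    calc P = ∑ i, ∑ k ∈ Finset.range (n+1),
        (G.degree i:ℝ) * (w k * (if k < r i then 1 else 0)) := by
          rw [hPdef]
          refine Finset.sum_congr rfl fun i _ => ?_
          rw [hind i, Finset.mul_sum]
      _ = ∑ k ∈ Finset.range (n+1), ∑ i,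
        (G.degree i:ℝ) * (w k * (if k < r i then 1 else 0)) := Finset.sum_comm
      _ = ∑ k ∈ Finset.range (n+1), w k * volume G (S k) := by
          refine Finset.sum_congr rfl fun k _ => ?_
          rw [hvolS, Finset.mul_sum]
          refine Finset.sum_congr rfl fun i _ => ?_
          by_cases h : k < r i <;> simp [h] <;> ring
  -- each relevant sweep cut satisfies the Cheeger bound
  have hcut : ∀ k, k < n+1 → 0 < w k →
      cheegerConst G * volume G (S k) ≤ boundaryEdges G (S k) := by
    intro k hk hwk
    have hq1 : 0 < q (k+1) := by
      have hwk' : 0 < q (k+1) - q k := hwk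
      linarith [hqnn k]
    have hfpos : 0 < (g ∘ σ) (⟨k+1, by omega⟩ : Fin (n+2)) := by
      have hmin : (⟨min (k+1) (n+1), by omega⟩ : Fin (n+2)) = ⟨k+1, by omega⟩ := by
        ext
        simp [min_eq_left (by omega : k+1 ≤ n+1)]
      rw [hqdef] at hq1
      simp only [hmin] at hq1
      have := hfnn (⟨k+1, by omega⟩ : Fin (n+2))
      nlinarith
    have hsub : S k ⊆ Finset.univ.filter (fun i => 0 < v i) := by
      intro i hi
      rw [hSdef, Finset.mem_filter] at hi
      have hki : k < r i := hi.2
      have hgi : 0 < g i := by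
        rw [hgr i]
        have : (⟨k+1, by omega⟩ : Fin (n+2)) ≤ σ.symm i := by
          rw [Fin.le_def]
          exact hki
        exact lt_of_lt_of_le hfpos (hmono this)
      rw [Finset.mem_filter]
      exact ⟨Finset.mem_univ i, (hgpos_iff i).mp hgi⟩
    have hSne : (S k).Nonempty := by
      refine ⟨σ ⟨n+1, by omega⟩, ?_⟩
      rw [hSdef, Finset.mem_filter]
      refine ⟨Finset.mem_univ _, ?_⟩
      rw [hrdef]
      simp only [Equiv.symm_apply_apply]
      exact hk
    have hvolpos : 0 < volume G (S k) := by
      rw [volume]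
      refine Finset.sum_pos (fun i _ => ?_) hSne
      linarith [hdeg1 i]
    have hvle : volume G (S k) ≤ volume G Finset.univ / 2 := by
      refine le_trans ?_ hvol
      rw [volume, volume]
      exact Finset.sum_le_sum_of_subset_of_nonneg hsub fun i _ _ => by positivity
    have hmem : boundaryEdges G (S k) / volume G (S k) ∈
        { x : ℝ | ∃ Sf : Finset (Fin (n+2)), Sf.Nonempty ∧
          volume G Sf ≤ volume G Finset.univ / 2 ∧
          x = boundaryEdges G Sf / volume G Sf } := ⟨S k, hSne, hvle, rfl⟩
    have hbdd : BddBelow { x : ℝ | ∃ Sf : Finset (Fin (n+2)), Sf.Nonempty ∧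
        volume G Sf ≤ volume G Finset.univ / 2 ∧
        x = boundaryEdges G Sf / volume G Sf } := by
      refine ⟨0, ?_⟩
      rintro x ⟨Sf, -, -, rfl⟩
      have h1 : 0 ≤ boundaryEdges G Sf := Nat.cast_nonneg _
      have h2 : 0 ≤ volume G Sf := Finset.sum_nonneg fun i _ => by positivity
      positivity
    have hle : cheegerConst G ≤ boundaryEdges G (S k) / volume G (S k) :=
      csInf_le hbdd hmem
    exact (le_div_iff₀ hvolpos).mp hle
  have hh0 : 0 ≤ cheegerConst G := cheeger_nonneg G
  -- lower bound on T
  have hTlow : 2 * cheegerConst G * P ≤ T := by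
    rw [hTsplit, hPsum, Finset.mul_sum]
    refine Finset.sum_le_sum fun k hk => ?_
    rw [hbdry k]
    rcases (hw k).lt_or_eq with hwk | hwk
    · have hc := hcut k (Finset.mem_range.mp hk) hwk
      calc 2 * cheegerConst G * (w k * volume G (S k))
          = w k * (2 * (cheegerConst G * volume G (S k))) := by ring
        _ ≤ w k * (2 * boundaryEdges G (S k)) := by
            apply mul_le_mul_of_nonneg_left _ (hw k)
            linarith
    · rw [← hwk]
      simp
  -- Cauchy–Schwarz
  set E : ℝ := ∑ i, ∑ j, if G.Adj i j then (g i - g j)^2 else 0 with hEdef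
  set F : ℝ := ∑ i, ∑ j, if G.Adj i j then (g i + g j)^2 else 0 with hFdef
  have hprod : ∀ (X : Fin (n+2) → Fin (n+2) → ℝ),
      (∑ p : Fin (n+2) × Fin (n+2), X p.1 p.2) = ∑ i, ∑ j, X i j := by
    intro X
    rw [← Finset.univ_product_univ, Finset.sum_product]
  have hCS : T^2 ≤ E * F := by
    have h := Finset.sum_mul_sq_le_sq_mul_sq Finset.univ
      (fun p : Fin (n+2) × Fin (n+2) => if G.Adj p.1 p.2 then |g p.1 - g p.2| else 0)
      (fun p : Fin (n+2) × Fin (n+2) => if G.Adj p.1 p.2 then g p.1 + g p.2 else 0)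
    have e1 : ∑ p : Fin (n+2) × Fin (n+2),
        (if G.Adj p.1 p.2 then |g p.1 - g p.2| else 0) *
        (if G.Adj p.1 p.2 then g p.1 + g p.2 else 0) = T := by
      rw [hTdef, ← hprod (fun i j => if G.Adj i j then |(g i)^2 - (g j)^2| else 0)]
      refine Finset.sum_congr rfl fun p _ => ?_
      by_cases hA : G.Adj p.1 p.2
      · rw [if_pos hA, if_pos hA, if_pos hA]
        rw [← abs_of_nonneg (add_nonneg (hgnn p.1) (hgnn p.2)), ← abs_mul]
        congr 1
        ring
      · simp [hA]
    have e2 : ∑ p : Fin (n+2) × Fin (n+2),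
        (if G.Adj p.1 p.2 then |g p.1 - g p.2| else 0)^2 = E := by
      rw [hEdef, ← hprod (fun i j => if G.Adj i j then (g i - g j)^2 else 0)]
      refine Finset.sum_congr rfl fun p _ => ?_
      by_cases hA : G.Adj p.1 p.2 <;> simp [hA, sq_abs]
    have e3 : ∑ p : Fin (n+2) × Fin (n+2),
        (if G.Adj p.1 p.2 then g p.1 + g p.2 else 0)^2 = F := by
      rw [hFdef, ← hprod (fun i j => if G.Adj i j then (g i + g j)^2 else 0)]
      refine Finset.sum_congr rfl fun p _ => ?_
      by_cases hA : G.Adj p.1 p.2 <;> simp [hA]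
    rw [e1, e2, e3] at h
    exact h
  have hEnn : 0 ≤ E := by
    rw [hEdef]
    refine Finset.sum_nonneg fun i _ => Finset.sum_nonneg fun j _ => ?_
    by_cases hA : G.Adj i j <;> simp [hA]
    exact sq_nonneg _
  have hc1 : ∑ i, ∑ j, (if G.Adj i j then (g i)^2 else 0) = P := by
    rw [hPdef]
    refine Finset.sum_congr rfl fun i _ => ?_
    have h1 : ∑ j, (if G.Adj i j then (g i)^2 else 0)
        = (∑ j, if G.Adj i j then (1:ℝ) else 0) * (g i)^2 := by
      rw [Finset.sum_mul]
      refine Finset.sum_congr rfl fun j _ => ?_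
      by_cases hA : G.Adj i j <;> simp [hA]
    rw [h1, ← SimpleGraph.degree_eq_sum_if_adj]
  have hc2 : ∑ i, ∑ j, (if G.Adj i j then (g j)^2 else 0) = P := by
    rw [Finset.sum_comm, ← hc1]
    refine Finset.sum_congr rfl fun j _ => Finset.sum_congr rfl fun i _ => ?_
    exact if_congr (G.adj_comm i j) rfl rfl
  have hF4 : F ≤ 4 * P := by
    have hstep : F ≤ ∑ i, ∑ j, (if G.Adj i j then 2*(g i)^2 + 2*(g j)^2 else 0) := by
      rw [hFdef]
      refine Finset.sum_le_sum fun i _ => Finset.sum_le_sum fun j _ => ?_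
      by_cases hA : G.Adj i j
      · rw [if_pos hA, if_pos hA]
        nlinarith [sq_nonneg (g i - g j)]
      · simp [hA]
    have hsplit : ∑ i, ∑ j, (if G.Adj i j then 2*(g i)^2 + 2*(g j)^2 else 0)
        = 2 * (∑ i, ∑ j, (if G.Adj i j then (g i)^2 else 0))
          + 2 * (∑ i, ∑ j, (if G.Adj i j then (g j)^2 else 0)) := by
      rw [Finset.mul_sum, Finset.mul_sum, ← Finset.sum_add_distrib]
      refine Finset.sum_congr rfl fun i _ => ?_
      rw [Finset.mul_sum, Finset.mul_sum, ← Finset.sum_add_distrib]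
      refine Finset.sum_congr rfl fun j _ => ?_
      by_cases hA : G.Adj i j <;> simp [hA] <;> ring
    calc F ≤ _ := hstep
    _ = 4 * P := by rw [hsplit, hc1, hc2]; ring
  have hE : E = 2 * (g ⬝ᵥ (L *ᵥ g)) := quad_form G g
  have hTnn : 0 ≤ T := by
    rw [hTdef]
    refine Finset.sum_nonneg fun i _ => Finset.sum_nonneg fun j _ => ?_
    by_cases hA : G.Adj i j <;> simp [hA]
  have hPpos : 0 < P := by
    obtain ⟨i0, hi0⟩ := hne
    rw [hPdef]
    refine Finset.sum_pos' (fun i _ => by positivity) ⟨i0, Finset.mem_univ i0, ?_⟩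
    have hg0 : g i0 = v i0 := hgv i0 hi0
    have h1 : 0 < (g i0)^2 := by rw [hg0]; positivity
    have h2 : (1:ℝ) ≤ (G.degree i0:ℝ) := hdeg1 i0
    nlinarith
  have hdmin0 : (0:ℝ) < dmin := lt_of_lt_of_le one_pos hdmin1
  have hdE : dmin * E ≤ 2 * lam * P := by
    have h1 : dmin * (g ⬝ᵥ g) ≤ P := by
      rw [hPdef]
      calc dmin * (g ⬝ᵥ g) = ∑ i, dmin * (g i * g i) := by
            rw [dotProduct, Finset.mul_sum]
      _ ≤ ∑ i, (G.degree i:ℝ) * (g i)^2 := by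
            refine Finset.sum_le_sum fun i _ => ?_
            have h2 := hdminle i
            have h3 := hgnn i
            nlinarith
    calc dmin * E = 2 * (dmin * (g ⬝ᵥ (L *ᵥ g))) := by rw [hE]; ring
    _ ≤ 2 * (dmin * (lam * (g ⬝ᵥ g))) := by
        have := mul_le_mul_of_nonneg_left hray hdmin0.le
        linarith
    _ = 2 * lam * (dmin * (g ⬝ᵥ g)) := by ring
    _ ≤ 2 * lam * P := by
        apply mul_le_mul_of_nonneg_left h1
        positivity
  have key : dmin * (2 * cheegerConst G * P)^2 ≤ 8 * lam * P^2 := by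
    have h1 : (2 * cheegerConst G * P)^2 ≤ T^2 := by
      have hnn : 0 ≤ 2 * cheegerConst G * P := by positivity
      nlinarith
    have h2 : T^2 ≤ E * (4*P) := le_trans hCS (mul_le_mul_of_nonneg_left hF4 hEnn)
    have h3 : dmin * (2 * cheegerConst G * P)^2 ≤ dmin * (E*(4*P)) :=
      mul_le_mul_of_nonneg_left (le_trans h1 h2) hdmin0.le
    have h4 : (dmin * E) * (4*P) ≤ (2*lam*P) * (4*P) :=
      mul_le_mul_of_nonneg_right hdE (by positivity)
    nlinarith [h3, h4]
  nlinarith [mul_pos hPpos hPpos, key, sq_nonneg (cheegerConst G), hh0]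

lemma cheeger_bound (G : SimpleGraph (Fin (n+2))) [DecidableRel G.Adj] (hconn : G.Connected)
    (lam : ℝ) (v : Fin (n+2) → ℝ) (hlam : 0 < lam) (hv : v ≠ 0)
    (heig : G.lapMatrix ℝ *ᵥ v = lam • v) :
    (1/2) * (Finset.univ.inf' Finset.univ_nonempty (fun i => (G.degree i : ℝ))) *
      (cheegerConst G)^2 ≤ lam := by
  have hvz : ∑ k, v k = 0 := by
    have hsym : ∀ a b, G.lapMatrix ℝ a b = G.lapMatrix ℝ b a := by
      intro a b
      exact (congrFun (congrFun (G.isSymm_lapMatrix (R := ℝ)) a) b).symm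
    have hrow : ∀ j, ∑ k, G.lapMatrix ℝ j k = 0 := by
      intro j
      have hr := congrFun (SimpleGraph.lapMatrix_mulVec_const_eq_zero (R := ℝ) G) j
      simpa [Matrix.mulVec, dotProduct] using hr
    have h2 : ∑ k, (G.lapMatrix ℝ *ᵥ v) k = 0 := by
      calc ∑ k, (G.lapMatrix ℝ *ᵥ v) k = ∑ k, ∑ j, G.lapMatrix ℝ k j * v j := rfl
      _ = ∑ j, ∑ k, G.lapMatrix ℝ k j * v j := Finset.sum_comm
      _ = ∑ j, (∑ k, G.lapMatrix ℝ j k) * v j := by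
            refine Finset.sum_congr rfl fun j _ => ?_
            rw [Finset.sum_mul]
            refine Finset.sum_congr rfl fun k _ => ?_
            rw [hsym k j]
      _ = 0 := by simp [hrow]
    have h1 : ∑ k, (G.lapMatrix ℝ *ᵥ v) k = lam * ∑ k, v k := by
      rw [heig]; simp [Finset.mul_sum]
    rw [h1] at h2
    rcases mul_eq_zero.mp h2 with h | h
    · exact absurd h hlam.ne'
    · exact h
  have hex : ∃ i, v i ≠ 0 := Function.ne_iff.mp hv
  have hpos : ∃ i, 0 < v i := by
    by_contra h
    push_neg at h
    obtain ⟨i, hi⟩ := hex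
    have hlt : v i < 0 := (h i).lt_of_ne hi
    have : ∑ k, v k < ∑ _k : Fin (n+2), (0:ℝ) :=
      Finset.sum_lt_sum (fun k _ => h k) ⟨i, Finset.mem_univ i, hlt⟩
    simp only [Finset.sum_const_zero] at this
    linarith
  have hneg : ∃ i, v i < 0 := by
    by_contra h
    push_neg at h
    obtain ⟨i, hi⟩ := hex
    have hlt : 0 < v i := (h i).lt_of_ne' hi
    have : ∑ _k : Fin (n+2), (0:ℝ) < ∑ k, v k :=
      Finset.sum_lt_sum (fun k _ => h k) ⟨i, Finset.mem_univ i, hlt⟩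
    simp only [Finset.sum_const_zero] at this
    linarith
  have hneg' : ∃ i, 0 < (-v) i := by
    obtain ⟨i, hi⟩ := hneg
    exact ⟨i, by simpa using hi⟩
  have hdisj : Disjoint (Finset.univ.filter (fun i => 0 < v i))
      (Finset.univ.filter (fun i => 0 < (-v) i)) := by
    rw [Finset.disjoint_filter]
    intro i _ h1
    simp only [Pi.neg_apply]
    linarith
  have hsum : volume G (Finset.univ.filter (fun i => 0 < v i)) +
      volume G (Finset.univ.filter (fun i => 0 < (-v) i)) ≤ volume G Finset.univ := by
    rw [volume, volume, volume, ← Finset.sum_union hdisj]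
    apply Finset.sum_le_sum_of_subset_of_nonneg (Finset.subset_univ _)
    intro i _ _
    positivity
  have hvnn : 0 ≤ volume G (Finset.univ.filter (fun i => 0 < v i)) :=
    Finset.sum_nonneg fun i _ => by positivity
  have hvnn' : 0 ≤ volume G (Finset.univ.filter (fun i => 0 < (-v) i)) :=
    Finset.sum_nonneg fun i _ => by positivity
  rcases le_or_gt (volume G (Finset.univ.filter (fun i => 0 < v i)))
      (volume G Finset.univ / 2) with hle | hgt
  · exact cheeger_core G hconn lam v hlam heig hpos hle
  · have hle' : volume G (Finset.univ.filter (fun i => 0 < (-v) i)) ≤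
        volume G Finset.univ / 2 := by linarith
    have heig' : G.lapMatrix ℝ *ᵥ (-v) = lam • (-v) := by
      rw [Matrix.mulVec_neg, heig, smul_neg]
    exact cheeger_core G hconn lam (-v) hlam heig' hneg' hle'


lemma mulVec_sum_smul {m : ℕ} (M : Matrix (Fin m) (Fin m) ℝ) (c : Fin m → ℝ)
    (b : Fin m → (Fin m → ℝ)) :
    M *ᵥ (∑ i, c i • b i) = ∑ i, c i • (M *ᵥ b i) := by
  rw [← Matrix.mulVecLin_apply, map_sum]
  refine Finset.sum_congr rfl fun i _ => ?_
  rw [_root_.map_smul, Matrix.mulVecLin_apply]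

lemma basis_dot {m : ℕ} (b : Fin m → (Fin m → ℝ))
    (hob : ∀ i j, b i ⬝ᵥ b j = if i = j then 1 else 0) (p q : Fin m → ℝ) :
    (∑ i, p i • b i) ⬝ᵥ (∑ j, q j • b j) = ∑ i, p i * q i := by
  have expand : ∀ (r : Fin m → ℝ) (k : Fin m), (∑ i, r i • b i) k = ∑ i, r i * b i k := by
    intro r k
    simp [Finset.sum_apply]
  calc (∑ i, p i • b i) ⬝ᵥ (∑ j, q j • b j)
      = ∑ k, (∑ i, p i * b i k) * (∑ j, q j * b j k) :=
        Finset.sum_congr rfl fun k _ => by rw [expand, expand]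
    _ = ∑ k, ∑ i, ∑ j, (p i * q j) * (b i k * b j k) := by
        refine Finset.sum_congr rfl fun k _ => ?_
        rw [Finset.sum_mul]
        refine Finset.sum_congr rfl fun i _ => ?_
        rw [Finset.mul_sum]
        exact Finset.sum_congr rfl fun j _ => by ring
    _ = ∑ i, ∑ k, ∑ j, (p i * q j) * (b i k * b j k) := Finset.sum_comm
    _ = ∑ i, ∑ j, ∑ k, (p i * q j) * (b i k * b j k) :=
        Finset.sum_congr rfl fun i _ => Finset.sum_comm
    _ = ∑ i, ∑ j, (p i * q j) * (b i ⬝ᵥ b j) := by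
        refine Finset.sum_congr rfl fun i _ => Finset.sum_congr rfl fun j _ => ?_
        rw [dotProduct, Finset.mul_sum]
    _ = ∑ i, p i * q i := by
        refine Finset.sum_congr rfl fun i _ => ?_
        rw [Finset.sum_eq_single i]
        · rw [hob i i, if_pos rfl, mul_one]
        · intro j _ hj
          rw [hob i j, if_neg (fun h => hj h.symm), mul_zero]
        · intro h
          exact absurd (Finset.mem_univ i) h

lemma basis_expand {m : ℕ} (b : Fin m → (Fin m → ℝ))
    (hob : ∀ i j, b i ⬝ᵥ b j = if i = j then 1 else 0)
    (x : Fin m → ℝ) : x = ∑ i, (b i ⬝ᵥ x) • b i := by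
  classical
  set U : Matrix (Fin m) (Fin m) ℝ := Matrix.of (fun i k => b i k) with hU
  have h1 : U * Uᵀ = 1 := by
    ext i j
    simpa [hU, Matrix.mul_apply, dotProduct, Matrix.one_apply] using hob i j
  have h2 : Uᵀ * U = 1 := mul_eq_one_comm.mp h1
  have h2k : ∀ l k, ∑ i, b i l * b i k = if l = k then 1 else 0 := by
    intro l k
    have := congrFun (congrFun h2 l) k
    simpa [hU, Matrix.mul_apply, Matrix.transpose_apply, Matrix.one_apply] using this
  funext k
  have : (∑ i, (b i ⬝ᵥ x) • b i) k = ∑ i, (∑ l, b i l * x l) * b i k := by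
    simp [Finset.sum_apply, dotProduct]
  rw [this]
  symm
  calc ∑ i, (∑ l, b i l * x l) * b i k
      = ∑ i, ∑ l, x l * (b i l * b i k) := by
        refine Finset.sum_congr rfl fun i _ => ?_
        rw [Finset.sum_mul]
        exact Finset.sum_congr rfl fun l _ => by ring
    _ = ∑ l, ∑ i, x l * (b i l * b i k) := Finset.sum_comm
    _ = ∑ l, x l * ∑ i, b i l * b i k := by
        refine Finset.sum_congr rfl fun l _ => (Finset.mul_sum _ _ _).symm
    _ = ∑ l, x l * (if l = k then 1 else 0) := by
        refine Finset.sum_congr rfl fun l _ => by rw [h2k l k]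
    _ = x k := by simp

lemma spectral_bound (G : SimpleGraph (Fin (n+2))) [DecidableRel G.Adj] (hconn : G.Connected)
    (s : Fin (n+2) → ℝ) (hs : s ≠ 0) (hmean : ∑ k, s k = 0) :
    ∃ (lam : ℝ) (v : Fin (n+2) → ℝ), 0 < lam ∧ v ≠ 0 ∧ G.lapMatrix ℝ *ᵥ v = lam • v ∧
      1 + lam ≤ (s ⬝ᵥ s) / (s ⬝ᵥ ((1 + G.lapMatrix ℝ)⁻¹ *ᵥ s)) := by
  classical
  set L := G.lapMatrix ℝ with hL
  have hpsd : L.PosSemidef := SimpleGraph.posSemidef_lapMatrix ℝ G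
  have hH : L.IsHermitian := hpsd.1
  set bb : Fin (n+2) → (Fin (n+2) → ℝ) := fun i => ⇑(hH.eigenvectorBasis i) with hbb
  set μ : Fin (n+2) → ℝ := hH.eigenvalues with hμ
  have hμ0 : ∀ i, 0 ≤ μ i := hpsd.eigenvalues_nonneg
  have heig : ∀ i, L *ᵥ bb i = μ i • bb i := hH.mulVec_eigenvectorBasis
  have hob : ∀ i j, bb i ⬝ᵥ bb j = if i = j then 1 else 0 := by
    intro i j
    have h := orthonormal_iff_ite.mp hH.eigenvectorBasis.orthonormal i j
    simpa [hbb, PiLp.inner_apply, RCLike.inner_apply, conj_trivial, dotProduct, mul_comm] using h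
  -- zero eigenvalue vectors are constant
  have hconst : ∀ i, μ i = 0 → ∀ k, bb i k = bb i 0 := by
    intro i hμi k
    have hLb : Matrix.toLin' L (bb i) = 0 := by
      rw [Matrix.toLin'_apply, heig i, hμi, zero_smul]
    have := (SimpleGraph.lapMatrix_mulVec_eq_zero_iff_forall_reachable (G := G) (x := bb i)).mp
      (by rwa [Matrix.toLin'_apply] at hLb)
    exact this k 0 (hconn.preconnected k 0)
  -- some eigenvalue is nonzero
  set K : Finset (Fin (n+2)) := Finset.univ.filter (fun i => μ i ≠ 0) with hKdef
  have hK : K.Nonempty := by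
    by_contra hKe
    rw [Finset.not_nonempty_iff_eq_empty, Finset.filter_eq_empty_iff] at hKe
    have hall : ∀ i, μ i = 0 := fun i => by
      have := hKe (Finset.mem_univ i); simpa using this
    have h01 : bb 0 ⬝ᵥ bb 1 = 0 := by
      rw [hob 0 1, if_neg (by simp [Fin.ext_iff])]
    have hc0 : ∀ k, bb 0 k = bb 0 0 := hconst 0 (hall 0)
    have hc1 : ∀ k, bb 1 k = bb 1 0 := hconst 1 (hall 1)
    have h00 : bb 0 ⬝ᵥ bb 0 = 1 := by rw [hob 0 0, if_pos rfl]
    have h11 : bb 1 ⬝ᵥ bb 1 = 1 := by rw [hob 1 1, if_pos rfl]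
    have e00 : (n+2 : ℝ) * (bb 0 0 * bb 0 0) = 1 := by
      rw [← h00, dotProduct]
      rw [Finset.sum_congr rfl fun k _ => by rw [hc0 k]]
      simp [Finset.sum_const, Finset.card_univ]
    have e11 : (n+2 : ℝ) * (bb 1 0 * bb 1 0) = 1 := by
      rw [← h11, dotProduct]
      rw [Finset.sum_congr rfl fun k _ => by rw [hc1 k]]
      simp [Finset.sum_const, Finset.card_univ]
    have e01 : (n+2 : ℝ) * (bb 0 0 * bb 1 0) = 0 := by
      rw [← h01, dotProduct]
      rw [Finset.sum_congr rfl fun k _ => by rw [hc0 k, hc1 k]]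
      simp [Finset.sum_const, Finset.card_univ]
    have hn2 : (0:ℝ) < (n+2 : ℝ) := by positivity
    have hb0 : bb 0 0 ≠ 0 := by
      intro h; rw [h] at e00; simp at e00
    have hb1 : bb 1 0 ≠ 0 := by
      intro h; rw [h] at e11; simp at e11
    have : bb 0 0 * bb 1 0 = 0 := by
      rcases mul_eq_zero.mp e01 with h | h
      · exact absurd h hn2.ne'
      · exact h
    rcases mul_eq_zero.mp this with h | h
    · exact hb0 h
    · exact hb1 h
  obtain ⟨i0, hi0K, hinf⟩ := Finset.exists_mem_eq_inf' hK μ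
  set lam := μ i0 with hlamdef
  have hi0ne : μ i0 ≠ 0 := by
    have := Finset.mem_filter.mp hi0K
    exact this.2
  have hlam : 0 < lam := (hμ0 i0).lt_of_ne' hi0ne
  have hlamle : ∀ i, μ i ≠ 0 → lam ≤ μ i := by
    intro i hi
    exact le_of_eq_of_le hinf.symm
      (Finset.inf'_le μ (Finset.mem_filter.mpr ⟨Finset.mem_univ i, hi⟩))
  refine ⟨lam, bb i0, hlam, ?_, heig i0, ?_⟩
  · intro h
    have := hob i0 i0
    rw [h, if_pos rfl] at this
    simp [dotProduct] at this
  -- the ratio bound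
  set M : Matrix (Fin (n+2)) (Fin (n+2)) ℝ := 1 + L with hM
  have hMpd : M.PosDef := Matrix.PosDef.add_posSemidef Matrix.PosDef.one hpsd
  have hMinv : M⁻¹ * M = 1 := Matrix.nonsing_inv_mul _ hMpd.det_pos.ne'.isUnit
  have h1μ : ∀ i, (0:ℝ) < 1 + μ i := fun i => by linarith [hμ0 i]
  have hMb : ∀ i, M *ᵥ bb i = (1 + μ i) • bb i := by
    intro i
    rw [hM, Matrix.add_mulVec, Matrix.one_mulVec, heig i, add_smul, one_smul]
  have hMib : ∀ i, M⁻¹ *ᵥ bb i = (1 + μ i)⁻¹ • bb i := by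
    intro i
    have h1 : M⁻¹ *ᵥ (M *ᵥ bb i) = bb i := by
      rw [Matrix.mulVec_mulVec, hMinv, Matrix.one_mulVec]
    rw [hMb i, Matrix.mulVec_smul] at h1
    have h2 := congrArg (fun y => (1 + μ i)⁻¹ • y) h1
    simp only [smul_smul, inv_mul_cancel₀ (h1μ i).ne', one_smul] at h2
    exact h2
  set c : Fin (n+2) → ℝ := fun i => bb i ⬝ᵥ s with hc
  have hsexp : s = ∑ i, c i • bb i := basis_expand bb hob s
  have hczero : ∀ i, μ i = 0 → c i = 0 := by
    intro i hμi
    have hcst := hconst i hμi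
    have : c i = ∑ k, bb i 0 * s k := by
      rw [hc]
      exact Finset.sum_congr rfl fun k _ => by rw [hcst k]
    rw [this, ← Finset.mul_sum, hmean, mul_zero]
  have ht : M⁻¹ *ᵥ s = ∑ i, (c i * (1 + μ i)⁻¹) • bb i := by
    conv_lhs => rw [hsexp]
    rw [mulVec_sum_smul]
    refine Finset.sum_congr rfl fun i _ => ?_
    rw [hMib i, smul_smul]
  have hst : s ⬝ᵥ (M⁻¹ *ᵥ s) = ∑ i, c i * (c i * (1 + μ i)⁻¹) := by
    rw [ht]
    conv_lhs => rw [hsexp]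
    exact basis_dot bb hob c _
  have hss : s ⬝ᵥ s = ∑ i, c i * c i := by
    conv_lhs => rw [hsexp]
    exact basis_dot bb hob c c
  have hcex : ∃ i, c i ≠ 0 := by
    by_contra h
    push_neg at h
    apply hs
    rw [hsexp]
    refine funext fun k => ?_
    simp [Finset.sum_apply, h]
  have hpos : 0 < s ⬝ᵥ (M⁻¹ *ᵥ s) := by
    rw [hst]
    obtain ⟨i, hi⟩ := hcex
    refine Finset.sum_pos' (fun j _ => ?_) ⟨i, Finset.mem_univ i, ?_⟩
    · have := (h1μ j).le
      have h2 : 0 ≤ (1 + μ j)⁻¹ := inv_nonneg.mpr this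
      nlinarith [mul_self_nonneg (c j)]
    · have h2 : 0 < (1 + μ i)⁻¹ := inv_pos.mpr (h1μ i)
      have h3 : 0 < c i * c i := mul_self_pos.mpr hi
      nlinarith
  have h1lam : (0:ℝ) < 1 + lam := by linarith
  have hterm : ∀ i, c i * (c i * (1 + μ i)⁻¹) ≤ (1 + lam)⁻¹ * (c i * c i) := by
    intro i
    by_cases hμi : μ i = 0
    · rw [hczero i hμi]
      simp
    · have hle : lam ≤ μ i := hlamle i hμi
      have hinv : (1 + μ i)⁻¹ ≤ (1 + lam)⁻¹ := by
        apply inv_anti₀ h1lam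
        linarith
      have hcc : 0 ≤ c i * c i := mul_self_nonneg _
      calc c i * (c i * (1 + μ i)⁻¹) = (c i * c i) * (1 + μ i)⁻¹ := by ring
      _ ≤ (c i * c i) * (1 + lam)⁻¹ := mul_le_mul_of_nonneg_left hinv hcc
      _ = (1 + lam)⁻¹ * (c i * c i) := by ring
  have hsum_le : s ⬝ᵥ (M⁻¹ *ᵥ s) ≤ (1 + lam)⁻¹ * (s ⬝ᵥ s) := by
    rw [hst, hss, Finset.mul_sum]
    exact Finset.sum_le_sum fun i _ => hterm i
  rw [le_div_iff₀ hpos]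
  have := mul_le_mul_of_nonneg_left hsum_le h1lam.le
  calc (1 + lam) * (s ⬝ᵥ (M⁻¹ *ᵥ s)) ≤ (1 + lam) * ((1 + lam)⁻¹ * (s ⬝ᵥ s)) := this
  _ = s ⬝ᵥ s := by
      rw [← mul_assoc, mul_inv_cancel₀ h1lam.ne', one_mul]

end CheegerAux

/-- For a connected graph `G` and any nonzero mean-zero `s`, the conflict
contraction ratio `sᵀs / (sᵀ(I+L)⁻¹s)` is at least `1 + (1/2) d_min h_G²`,
and in particular at least `1`. -/
theorem conflict_contraction_cheeger {n : ℕ} (G : SimpleGraph (Fin (n + 2)))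
    [DecidableRel G.Adj] (hconn : G.Connected)
    (s : Fin (n + 2) → ℝ) (hs : s ≠ 0) (hmean : ∑ k, s k = 0) :
    1 + (1 / 2) *
        (Finset.univ.inf' Finset.univ_nonempty (fun i => (G.degree i : ℝ))) *
        (cheegerConst G) ^ 2
      ≤ (s ⬝ᵥ s) / (s ⬝ᵥ ((1 + G.lapMatrix ℝ)⁻¹ *ᵥ s)) ∧
    1 ≤ (s ⬝ᵥ s) / (s ⬝ᵥ ((1 + G.lapMatrix ℝ)⁻¹ *ᵥ s)) := by
  obtain ⟨lam, v, hlam, hv, heig, hratio⟩ := CheegerAux.spectral_bound G hconn s hs hmean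
  have hch := CheegerAux.cheeger_bound G hconn lam v hlam hv heig
  have hd0 : (0:ℝ) ≤ Finset.univ.inf' Finset.univ_nonempty (fun i => (G.degree i : ℝ)) := by
    apply Finset.le_inf'
    intro i _
    positivity
  have hnn : (0:ℝ) ≤ (1 / 2) *
      (Finset.univ.inf' Finset.univ_nonempty (fun i => (G.degree i : ℝ))) *
      (cheegerConst G) ^ 2 := by positivity
  constructor
  · calc 1 + (1 / 2) *
        (Finset.univ.inf' Finset.univ_nonempty (fun i => (G.degree i : ℝ))) *
        (cheegerConst G) ^ 2 ≤ 1 + lam := by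
          have : (1 / 2) *
            (Finset.univ.inf' Finset.univ_nonempty (fun i => (G.degree i : ℝ))) *
            (cheegerConst G) ^ 2 ≤ lam := by
            calc (1 / 2) *
              (Finset.univ.inf' Finset.univ_nonempty (fun i => (G.degree i : ℝ))) *
              (cheegerConst G) ^ 2 = (1/2) *
              (Finset.univ.inf' Finset.univ_nonempty (fun i => (G.degree i : ℝ))) *
              (cheegerConst G) ^ 2 := by ring
            _ ≤ lam := hch
          linarith
    _ ≤ _ := hratio
  · have : (1:ℝ) ≤ 1 + (1 / 2) *
        (Finset.univ.inf' Finset.univ_nonempty (fun i => (G.degree i : ℝ))) *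
        (cheegerConst G) ^ 2 := by linarith
    calc (1:ℝ) ≤ 1 + (1 / 2) *
        (Finset.univ.inf' Finset.univ_nonempty (fun i => (G.degree i : ℝ))) *
        (cheegerConst G) ^ 2 := this
    _ ≤ (s ⬝ᵥ s) / (s ⬝ᵥ ((1 + G.lapMatrix ℝ)⁻¹ *ᵥ s)) := by
        calc 1 + (1 / 2) *
          (Finset.univ.inf' Finset.univ_nonempty (fun i => (G.degree i : ℝ))) *
          (cheegerConst G) ^ 2 ≤ 1 + lam := by linarith
        _ ≤ _ := hratio
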